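/- Let μ be a finitely supported probability distribution over ℝⁿ with mean m = 𝔼_μ x, and suppose ε‖m‖² < ‖𝔼_μ xxᵀ − mmᵀ‖_F. Then there exists a subspace S of dimension at most ⌈√n⌉ + 2 such that 𝔼_μ ‖Π_S x‖² ≥ (1 + ε)‖m‖². -/

import Mathlib

/-!
Let `C = 𝔼 (x - m)(x - m)ᵀ = 𝔼 xxᵀ - mmᵀ`, with eigenvalues `λⱼ ≥ 0` and orthonormal
eigenvectors `vⱼ`, so that `‖C‖_F² = ∑ λⱼ²`. For `k = ⌈√n⌉` we have `n ≤ k²`, and then the `k`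
largest eigenvalues alone satisfy `∑_K λⱼ ≥ ‖C‖_F`. Project onto `S = span (m, vⱼ : j ∈ K)`, of
dimension at most `k + 1`. Since `m ∈ S`,
`𝔼 ‖Π_S x‖² = ‖m‖² + 𝔼 ‖Π_S (x - m)‖² ≥ ‖m‖² + ∑_K 𝔼 ⟪vⱼ, x - m⟫² = ‖m‖² + ∑_K λⱼ`,
which is at least `‖m‖² + ‖C‖_F > (1 + ε) ‖m‖²`.
-/

open Matrix

noncomputable def frob {m n : Type*} [Fintype m] [Fintype n] (A : Matrix m n ℝ) : ℝ :=
  Real.sqrt (∑ i, ∑ j, (A i j) ^ 2)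

open Finset RealInnerProductSpace

section LargestTerms

variable {α : Type*} [Fintype α] [DecidableEq α]

theorem Finset.exists_card_eq_forall_notMem_le (f : α → ℝ) {k : ℕ} (hk : k ≤ Fintype.card α) :
    ∃ K : Finset α, #K = k ∧ ∀ i ∈ K, ∀ j ∉ K, f j ≤ f i := by
  obtain ⟨K, hKmem, hKmax⟩ := exists_max_image (univ.powersetCard k) (fun K => ∑ i ∈ K, f i)
    (powersetCard_nonempty.2 (by simpa using hk))
  have hK : #K = k := (mem_powersetCard.1 hKmem).2
  refine ⟨K, hK, fun i hi j hj => ?_⟩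
  have hjK : j ∉ K.erase i := fun h => hj (mem_of_mem_erase h)
  have hcard : #(insert j (K.erase i)) = k := by
    rw [card_insert_of_notMem hjK, card_erase_of_mem hi, hK]
    exact Nat.sub_add_cancel (hK ▸ card_pos.2 ⟨i, hi⟩)
  have hswap := hKmax _ (mem_powersetCard.2 ⟨subset_univ _, hcard⟩)
  rw [sum_insert hjK, sum_erase_eq_sub hi] at hswap
  linarith

/-- With `t = min_K f`, the `|Kᶜ| ≤ |K| (|K| - 1)` omitted squares are each at most `t²`, while the
cross terms of `(∑_K f)²` contribute at least `|K| (|K| - 1) t²`. -/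
theorem Finset.sum_sq_le_sq_sum_of_forall_le {f : α → ℝ} (hf : ∀ i, 0 ≤ f i) {K : Finset α}
    (hK : ∀ i ∈ K, ∀ j ∉ K, f j ≤ f i) (hcard : Fintype.card α ≤ #K ^ 2) :
    ∑ i, f i ^ 2 ≤ (∑ i ∈ K, f i) ^ 2 := by
  rcases K.eq_empty_or_nonempty with rfl | hKne
  · have : IsEmpty α := Fintype.card_eq_zero_iff.1 (by simpa using hcard)
    simp
  set t := K.inf' hKne f
  have ht : ∀ i ∈ K, t ≤ f i := fun i hi => inf'_le f hi
  have ht0 : 0 ≤ t := (le_inf'_iff hKne f).2 fun i _ => hf i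
  have houtside : ∑ j ∈ Kᶜ, f j ^ 2 ≤ #Kᶜ * t ^ 2 := by
    rw [← nsmul_eq_mul, ← sum_const]
    refine sum_le_sum fun j hj => pow_le_pow_left₀ (hf j) ?_ 2
    exact (le_inf'_iff hKne f).2 fun i hi => hK i hi j (mem_compl.1 hj)
  have hinside : ∑ i ∈ K, f i ^ 2 + #K * (#K - 1) * t ^ 2 ≤ (∑ i ∈ K, f i) ^ 2 := by
    have hrest : ∀ i ∈ K, (#K - 1) * t ≤ ∑ j ∈ K.erase i, f j := fun i hi => by
      have := card_nsmul_le_sum (K.erase i) f t fun j hj => ht j (mem_of_mem_erase hj)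
      rwa [card_erase_of_mem hi, nsmul_eq_mul, Nat.cast_pred (card_pos.2 ⟨i, hi⟩)] at this
    calc ∑ i ∈ K, f i ^ 2 + #K * (#K - 1) * t ^ 2
        = ∑ i ∈ K, (f i ^ 2 + t * ((#K - 1) * t)) := by
          rw [sum_add_distrib, sum_const, nsmul_eq_mul]; ring
      _ ≤ ∑ i ∈ K, (f i ^ 2 + f i * ∑ j ∈ K.erase i, f j) :=
          sum_le_sum fun i hi => (add_le_add_iff_left _).2 (mul_le_mul_of_nonneg (ht i hi)
            (hrest i hi) ht0 (sum_nonneg fun j _ => hf j))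
      _ = (∑ i ∈ K, f i) ^ 2 := by
          rw [sq, sum_mul]
          refine sum_congr rfl fun i hi => ?_
          rw [← add_sum_erase K f hi]; ring
  have hcompl : (#Kᶜ : ℝ) ≤ #K * (#K - 1) := by
    have h : (#Kᶜ + #K : ℝ) ≤ #K ^ 2 := by
      exact_mod_cast (card_compl_add_card K).trans_le hcard
    linarith
  calc ∑ i, f i ^ 2 = ∑ i ∈ K, f i ^ 2 + ∑ j ∈ Kᶜ, f j ^ 2 := (sum_add_sum_compl K _).symm
    _ ≤ ∑ i ∈ K, f i ^ 2 + #K * (#K - 1) * t ^ 2 := by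
        gcongr; exact houtside.trans (by gcongr)
    _ ≤ _ := hinside

theorem exists_card_le_sqrt_sum_sq_le_sum {f : α → ℝ} (hf : ∀ i, 0 ≤ f i) {k : ℕ}
    (hk : Fintype.card α ≤ k ^ 2) :
    ∃ K : Finset α, #K ≤ k ∧ √(∑ i, f i ^ 2) ≤ ∑ i ∈ K, f i := by
  obtain ⟨K, hK, hKf⟩ := exists_card_eq_forall_notMem_le f (min_le_right k (Fintype.card α))
  have hcard : Fintype.card α ≤ #K ^ 2 := by
    rcases min_choice k (Fintype.card α) with h | h <;> rw [hK, h]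
    exacts [hk, Nat.le_self_pow two_ne_zero _]
  refine ⟨K, hK ▸ min_le_left _ _, Real.sqrt_le_iff.2 ⟨sum_nonneg fun i _ => hf i, ?_⟩⟩
  exact sum_sq_le_sq_sum_of_forall_le hf hKf hcard

end LargestTerms

theorem Nat.le_ceil_sqrt_sq (n : ℕ) : n ≤ ⌈√(n : ℝ)⌉₊ ^ 2 := by
  have : (n : ℝ) ≤ (⌈√(n : ℝ)⌉₊ : ℝ) ^ 2 := by
    calc (n : ℝ) = √(n : ℝ) ^ 2 := (Real.sq_sqrt n.cast_nonneg).symm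
      _ ≤ _ := pow_le_pow_left₀ (Real.sqrt_nonneg _) (Nat.le_ceil _) 2
  exact_mod_cast this

section Covariance

variable {ι n : Type*} [Fintype ι]

theorem sum_smul_vecMulVec_sub_mean {R : Type*} [CommRing R] (p : ι → R) (x : ι → n → R)
    (hp : ∑ i, p i = 1) :
    ∑ i, p i • vecMulVec (x i - ∑ j, p j • x j) (x i - ∑ j, p j • x j) =
      ∑ i, p i • vecMulVec (x i) (x i) - vecMulVec (∑ j, p j • x j) (∑ j, p j • x j) := by
  ext a b
  simp only [Matrix.sum_apply, Matrix.sub_apply, Matrix.smul_apply, vecMulVec_apply,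
    Pi.sub_apply, Finset.sum_apply, Pi.smul_apply, smul_eq_mul]
  set ma := ∑ j, p j * x j a
  set mb := ∑ j, p j * x j b
  have hexpand : ∀ i, p i * ((x i a - ma) * (x i b - mb)) =
      p i * (x i a * x i b) - mb * (p i * x i a) - ma * (p i * x i b) + ma * mb * p i :=
    fun i => by ring
  simp only [hexpand, sum_add_distrib, sum_sub_distrib, ← mul_sum, hp]
  ring

theorem isHermitian_sum_smul_vecMulVec_self (p : ι → ℝ) (y : ι → n → ℝ) :
    (∑ i, p i • vecMulVec (y i) (y i)).IsHermitian :=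
  isHermitian_iff_isSymm.2 <| IsSymm.ext fun a b => by
    simp [Matrix.sum_apply, vecMulVec_apply, mul_comm]

variable [Fintype n]

theorem dotProduct_sum_smul_vecMulVec_self_mulVec {R : Type*} [CommRing R] (p : ι → R)
    (y : ι → n → R) (u : n → R) :
    u ⬝ᵥ (∑ i, p i • vecMulVec (y i) (y i)) *ᵥ u = ∑ i, p i * (u ⬝ᵥ y i) ^ 2 := by
  simp only [Matrix.sum_mulVec, Matrix.smul_mulVec, vecMulVec_mulVec, dotProduct_sum,
    dotProduct_smul, smul_eq_mul]
  refine sum_congr rfl fun i _ => ?_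
  rw [op_smul_eq_smul, smul_eq_mul, dotProduct_comm (y i) u, sq]

theorem Matrix.IsHermitian.eigenvalues_sum_smul_vecMulVec_self [DecidableEq n] {p : ι → ℝ}
    {y : ι → n → ℝ} (hA : (∑ i, p i • vecMulVec (y i) (y i)).IsHermitian) (j : n) :
    hA.eigenvalues j = ∑ i, p i * ⟪hA.eigenvectorBasis j, WithLp.toLp 2 (y i)⟫ ^ 2 := by
  rw [hA.eigenvalues_eq j]
  simp only [RCLike.re_to_real, star_trivial, dotProduct_sum_smul_vecMulVec_self_mulVec]
  refine sum_congr rfl fun i _ => ?_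
  rw [EuclideanSpace.inner_eq_star_dotProduct, star_trivial, dotProduct_comm]

end Covariance

theorem Matrix.IsHermitian.frob_eq_sqrt_sum_sq_eigenvalues {n : Type*} [Fintype n]
    [DecidableEq n] {A : Matrix n n ℝ} (hA : A.IsHermitian) :
    frob A = √(∑ i, hA.eigenvalues i ^ 2) := by
  set U : Matrix n n ℝ := (hA.eigenvectorUnitary : Matrix n n ℝ)
  set D : Matrix n n ℝ := diagonal hA.eigenvalues
  have hA' : A = U * D * star U := by
    simpa [Unitary.conjStarAlgAut_apply] using hA.spectral_theorem
  have hUU : star U * U = 1 := Unitary.coe_star_mul_self _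
  rw [frob]
  congr 1
  calc ∑ i, ∑ j, A i j ^ 2 = (A * A).trace := by
        simp only [trace, diag_apply, mul_apply, sq]
        refine sum_congr rfl fun i _ => sum_congr rfl fun j _ => ?_
        rw [← hA.apply j i]; simp
    _ = (D * D).trace := by
        rw [hA', show U * D * star U * (U * D * star U) = U * (D * D) * star U by
          simp only [Matrix.mul_assoc, ← Matrix.mul_assoc (star U) U, hUU, Matrix.one_mul],
          trace_mul_cycle, hUU, Matrix.one_mul]
    _ = ∑ i, hA.eigenvalues i ^ 2 := by simp [D, sq]

theorem Submodule.exists_matrix_starProjection {𝕜 ι : Type*} [RCLike 𝕜] [Fintype ι]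
    [DecidableEq ι] (S : Submodule 𝕜 (EuclideanSpace 𝕜 ι)) :
    ∃ P : Matrix ι ι 𝕜, P.IsHermitian ∧ P * P = P ∧ P.rank = Module.finrank 𝕜 S ∧
      ∀ w, P *ᵥ w = WithLp.ofLp (S.starProjection (WithLp.toLp 2 w)) := by
  set P : Matrix ι ι 𝕜 := toEuclideanLin.symm S.starProjection.toLinearMap
  have hP : toEuclideanLin P = S.starProjection.toLinearMap := toEuclideanLin.apply_symm_apply _
  refine ⟨P, isSymmetric_toEuclideanLin_iff.mp (hP ▸ S.starProjection_isSymmetric), ?_, ?_, ?_⟩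
  · apply toEuclideanLin.injective
    rw [toLpLin_mul_same, hP]
    exact congrArg ContinuousLinearMap.toLinearMap S.isIdempotentElem_starProjection.eq
  · rw [rank_eq_finrank_range_toLin P (EuclideanSpace.basisFun ι 𝕜).toBasis
      (EuclideanSpace.basisFun ι 𝕜).toBasis, ← toEuclideanLin_eq_toLin_orthonormal, hP]
    conv_rhs => rw [← S.range_starProjection]
  · intro w
    exact congrArg WithLp.ofLp (LinearMap.congr_fun hP (WithLp.toLp 2 w))

theorem EuclideanSpace.dotProduct_ofLp_self {ι : Type*} [Fintype ι] (y : EuclideanSpace ℝ ι) :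
    y.ofLp ⬝ᵥ y.ofLp = ‖y‖ ^ 2 := by
  rw [← real_inner_self_eq_norm_sq, EuclideanSpace.inner_eq_star_dotProduct, star_trivial]

section Projection

variable {ι κ E : Type*} [Fintype ι] [NormedAddCommGroup E] [InnerProductSpace ℝ E]

theorem sum_mul_norm_sq_eq_norm_sum_sq_add {p : ι → ℝ} (hp : ∑ i, p i = 1) (y : ι → E) :
    ∑ i, p i * ‖y i‖ ^ 2 = ‖∑ i, p i • y i‖ ^ 2 + ∑ i, p i * ‖y i - ∑ j, p j • y j‖ ^ 2 := by
  set μ := ∑ j, p j • y j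
  have hcross : ∑ i, p i * ⟪y i, μ⟫ = ‖μ‖ ^ 2 := by
    simp only [← real_inner_smul_left, ← sum_inner, μ, real_inner_self_eq_norm_sq]
  have hexpand : ∀ i,
      p i * ‖y i - μ‖ ^ 2 = p i * ‖y i‖ ^ 2 - 2 * (p i * ⟪y i, μ⟫) + p i * ‖μ‖ ^ 2 :=
    fun i => by rw [norm_sub_sq_real]; ring
  simp only [hexpand, sum_add_distrib, sum_sub_distrib, ← mul_sum, ← sum_mul, hcross, hp]
  ring

theorem Orthonormal.sum_inner_sq_le_norm_starProjection_sq {S : Submodule ℝ E}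
    [S.HasOrthogonalProjection] {v : κ → E} (hv : Orthonormal ℝ v) {K : Finset κ}
    (hvS : ∀ j ∈ K, v j ∈ S) (y : E) :
    ∑ j ∈ K, ⟪v j, y⟫ ^ 2 ≤ ‖S.starProjection y‖ ^ 2 := by
  have hproj : ∀ j ∈ K, ⟪v j, y⟫ = ⟪v j, S.starProjection y⟫ := fun j hj => by
    rw [← S.inner_starProjection_left_eq_right, S.starProjection_eq_self_iff.2 (hvS j hj)]
  rw [sum_congr rfl fun j hj => by rw [hproj j hj, ← sq_abs, ← Real.norm_eq_abs]]
  exact hv.sum_inner_products_le _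

theorem norm_sq_add_sum_variance_le_sum_mul_norm_starProjection_sq {S : Submodule ℝ E}
    [S.HasOrthogonalProjection] {p : ι → ℝ} (hp0 : ∀ i, 0 ≤ p i) (hp : ∑ i, p i = 1)
    {x : ι → E} (hmS : ∑ i, p i • x i ∈ S) {v : κ → E} (hv : Orthonormal ℝ v) {K : Finset κ}
    (hvS : ∀ j ∈ K, v j ∈ S) :
    ‖∑ i, p i • x i‖ ^ 2 + ∑ j ∈ K, ∑ i, p i * ⟪v j, x i - ∑ i, p i • x i⟫ ^ 2 ≤
      ∑ i, p i * ‖S.starProjection (x i)‖ ^ 2 := by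
  set m := ∑ i, p i • x i
  have hm : S.starProjection m = m := S.starProjection_eq_self_iff.2 hmS
  have hmean : ∑ i, p i • S.starProjection (x i) = m := by
    simp only [← map_smul, ← map_sum, m, hm]
  rw [sum_mul_norm_sq_eq_norm_sum_sq_add hp, hmean, sum_comm]
  gcongr with i
  simp only [← mul_sum]
  gcongr
  · exact hp0 i
  have := hv.sum_inner_sq_le_norm_starProjection_sq hvS (x i - m)
  rwa [map_sub, hm] at this

end Projection

theorem stmt6_general (n : ℕ) {ι : Type*} [Fintype ι]
    (p : ι → ℝ) (x : ι → (Fin n → ℝ))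
    (hp : ∀ i, 0 ≤ p i) (hsum : ∑ i, p i = 1)
    (m : Fin n → ℝ) (hm : m = ∑ i, p i • x i)
    (ε : ℝ)
    (hgap : ε * (m ⬝ᵥ m) <
      frob ((∑ i, p i • Matrix.vecMulVec (x i) (x i)) - Matrix.vecMulVec m m)) :
    ∃ P : Matrix (Fin n) (Fin n) ℝ, P.IsSymm ∧ P * P = P ∧
      P.rank ≤ ⌈Real.sqrt n⌉₊ + 2 ∧
      (1 + ε) * (m ⬝ᵥ m) ≤ ∑ i, p i * (P.mulVec (x i) ⬝ᵥ P.mulVec (x i)) := by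
  classical
  set C := ∑ i, p i • vecMulVec (x i - m) (x i - m)
  have hC : C.IsHermitian := isHermitian_sum_smul_vecMulVec_self p _
  have hgapC : ε * (m ⬝ᵥ m) < √(∑ j, hC.eigenvalues j ^ 2) := by
    rwa [hm, ← sum_smul_vecMulVec_sub_mean p x hsum, ← hm,
      hC.frob_eq_sqrt_sum_sq_eigenvalues] at hgap
  set X : ι → EuclideanSpace ℝ (Fin n) := fun i => WithLp.toLp 2 (x i)
  have hX : ∑ i, p i • X i = WithLp.toLp 2 m := by simp [X, hm]
  set v := hC.eigenvectorBasis
  have heig : ∀ j, hC.eigenvalues j = ∑ i, p i * ⟪v j, X i - ∑ i, p i • X i⟫ ^ 2 := fun j => by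
    simp only [hC.eigenvalues_sum_smul_vecMulVec_self, hX, X, WithLp.toLp_sub, v]
  obtain ⟨K, hK, hKeig⟩ := exists_card_le_sqrt_sum_sq_le_sum
    (fun j => (heig j).symm ▸ sum_nonneg fun i _ => mul_nonneg (hp i) (sq_nonneg _))
    (by simpa using Nat.le_ceil_sqrt_sq n)
  set T : Finset (EuclideanSpace ℝ (Fin n)) := insert (WithLp.toLp 2 m) (K.image v)
  set S := Submodule.span ℝ (T : Set (EuclideanSpace ℝ (Fin n)))
  obtain ⟨P, hPh, hPP, hPrank, hPw⟩ := S.exists_matrix_starProjection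
  refine ⟨P, isHermitian_iff_isSymm.1 hPh, hPP, ?_, ?_⟩
  · calc P.rank ≤ #T := hPrank ▸ finrank_span_finset_le_card T
      _ ≤ #K + 1 := (card_insert_le _ _).trans (by gcongr; exact card_image_le)
      _ ≤ ⌈√(n : ℝ)⌉₊ + 2 := by omega
  have hvS : ∀ j ∈ K, v j ∈ S := fun j hj =>
    Submodule.subset_span (mem_insert_of_mem (mem_image_of_mem v hj))
  have hmS : ∑ i, p i • X i ∈ S := hX ▸ Submodule.subset_span (mem_insert_self _ _)
  calc (1 + ε) * (m ⬝ᵥ m) ≤ ‖∑ i, p i • X i‖ ^ 2 + ∑ j ∈ K, hC.eigenvalues j := by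
        rw [hX, ← EuclideanSpace.dotProduct_ofLp_self]
        linarith [hgapC.trans_le hKeig]
    _ = ‖∑ i, p i • X i‖ ^ 2 + ∑ j ∈ K, ∑ i, p i * ⟪v j, X i - ∑ i, p i • X i⟫ ^ 2 := by
        simp only [heig]
    _ ≤ ∑ i, p i * ‖S.starProjection (X i)‖ ^ 2 :=
        norm_sq_add_sum_variance_le_sum_mul_norm_starProjection_sq hp hsum hmS v.orthonormal hvS
    _ = ∑ i, p i * (P *ᵥ x i ⬝ᵥ P *ᵥ x i) := by
        simp only [hPw, EuclideanSpace.dotProduct_ofLp_self, X]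

/-- If μ is a finitely supported distribution on ℝⁿ with mean m and
ε‖m‖² < ‖𝔼 xxᵀ − mmᵀ‖_F, then there is a subspace S (given by an orthogonal projection
matrix P, i.e. symmetric idempotent) of dimension at most ⌈√n⌉ + 2 with
𝔼 ‖Π_S x‖² ≥ (1 + ε)‖m‖². -/
theorem stmt6 (n : ℕ) {ι : Type*} [Fintype ι]
    (p : ι → ℝ) (x : ι → (Fin n → ℝ))
    (hp : ∀ i, 0 ≤ p i) (hsum : ∑ i, p i = 1)
    (m : Fin n → ℝ) (hm : m = ∑ i, p i • x i)
    (ε : ℝ) (hε : 0 < ε)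
    (hgap : ε * (m ⬝ᵥ m) <
      frob ((∑ i, p i • Matrix.vecMulVec (x i) (x i)) - Matrix.vecMulVec m m)) :
    ∃ P : Matrix (Fin n) (Fin n) ℝ, P.IsSymm ∧ P * P = P ∧
      P.rank ≤ ⌈Real.sqrt n⌉₊ + 2 ∧
      (1 + ε) * (m ⬝ᵥ m) ≤ ∑ i, p i * (P.mulVec (x i) ⬝ᵥ P.mulVec (x i)) :=
  stmt6_general n p x hp hsum m hm ε hgap
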